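/- Let $N \geq 2$, $-1/(N-1) < \beta \leq 1/(N-1)$, and let $V(r) = \int_0^r \psi(s)^{N-1} ds$ where $\psi : (0,\infty) \to (0,\infty)$ is continuous with $\psi(r) \asymp r^\beta$ for $r > 1$ and $\psi(r) \asymp r$ for $0 < r \leq 1$. If $\beta < 1/(N-1)$ then $1 + \max(0, \int_1^{r^2} dt / V(\sqrt{t})) \asymp (2+r)^{1 - \beta(N-1)}$ for $r \geq 0$, while if $\beta = 1/(N-1)$ then $1 + \max(0, \int_1^{r^2} dt / V(\sqrt{t})) \asymp \log(2+r)$. -/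
import Mathlib

open MeasureTheory Real

set_option maxHeartbeats 2000000 in
/-- Height function on model manifolds `M_ψ`. -/
theorem height_function_model_manifold
    (N : ℕ) (hN : 2 ≤ N) (β : ℝ)
    (hβl : -1 / (N - 1 : ℝ) < β) (hβu : β ≤ 1 / (N - 1 : ℝ))
    (ψ : ℝ → ℝ) (hψcont : Continuous ψ) (hψpos : ∀ r > 0, 0 < ψ r)
    (a b : ℝ) (ha : 0 < a) (hb : 0 < b)
    (hψlarge : ∀ r : ℝ, 1 < r → a * r ^ β ≤ ψ r ∧ ψ r ≤ b * r ^ β)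
    (hψsmall : ∀ r : ℝ, 0 < r → r ≤ 1 → a * r ≤ ψ r ∧ ψ r ≤ b * r)
    (V : ℝ → ℝ) (hV : ∀ r : ℝ, V r = ∫ s in (0:ℝ)..r, ψ s ^ (N - 1)) :
    (β < 1 / (N - 1 : ℝ) →
      ∃ c C : ℝ, 0 < c ∧ 0 < C ∧ ∀ r : ℝ, 0 ≤ r →
        c * (2 + r) ^ (1 - β * (N - 1 : ℝ))
            ≤ 1 + max 0 (∫ t in (1:ℝ)..r ^ 2, 1 / V (Real.sqrt t)) ∧
        1 + max 0 (∫ t in (1:ℝ)..r ^ 2, 1 / V (Real.sqrt t))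
            ≤ C * (2 + r) ^ (1 - β * (N - 1 : ℝ))) ∧
    (β = 1 / (N - 1 : ℝ) →
      ∃ c C : ℝ, 0 < c ∧ 0 < C ∧ ∀ r : ℝ, 0 ≤ r →
        c * Real.log (2 + r)
            ≤ 1 + max 0 (∫ t in (1:ℝ)..r ^ 2, 1 / V (Real.sqrt t)) ∧
        1 + max 0 (∫ t in (1:ℝ)..r ^ 2, 1 / V (Real.sqrt t))
            ≤ C * Real.log (2 + r)) := by
  have h2N : (2:ℝ) ≤ (N:ℝ) := by exact_mod_cast hN
  have hm0 : (0:ℝ) < (N:ℝ) - 1 := by linarith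
  set m : ℝ := (N:ℝ) - 1 with hm
  have hnm : ((N - 1 : ℕ) : ℝ) = m := by
    rw [Nat.cast_sub (by omega : 1 ≤ N)]; simp [hm]
  set α : ℝ := β * m with hα
  have hα1 : -1 < α := by
    have := (div_lt_iff₀ hm0).mp hβl
    linarith
  have hα2 : α ≤ 1 := by
    have := (le_div_iff₀ hm0).mp hβu
    linarith
  have hα1p : (0:ℝ) < α + 1 := by linarith
  set f : ℝ → ℝ := fun s => ψ s ^ (N - 1) with hf
  have hfc : Continuous f := hψcont.pow _
  have hfint : ∀ u v : ℝ, IntervalIntegrable f volume u v :=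
    fun u v => hfc.intervalIntegrable u v
  -- continuity of V
  have hVc : Continuous V := by
    have h := intervalIntegral.continuous_primitive (μ := volume) hfint 0
    exact h.congr (fun x => (hV x).symm)
  -- nonnegativity and positivity of V
  have hVnonneg : ∀ x : ℝ, 0 ≤ x → 0 ≤ V x := by
    intro x hx
    rw [hV, intervalIntegral.integral_of_le hx]
    exact setIntegral_nonneg measurableSet_Ioc
      (fun s hs => pow_nonneg (hψpos s hs.1).le _)
  have hVpos : ∀ x : ℝ, 0 < x → 0 < V x := by
    intro x hx
    rw [hV]
    exact intervalIntegral.intervalIntegral_pos_of_pos_on (hfint 0 x)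
      (fun s hs => pow_pos (hψpos s hs.1) _) hx
  -- pointwise bounds on f
  have hfb : ∀ s : ℝ, 1 ≤ s →
      a ^ (N-1) * s ^ α ≤ f s ∧ f s ≤ b ^ (N-1) * s ^ α := by
    intro s hs
    have hs0 : (0:ℝ) < s := by linarith
    show a ^ (N-1) * s ^ α ≤ ψ s ^ (N-1) ∧ ψ s ^ (N-1) ≤ b ^ (N-1) * s ^ α
    rcases eq_or_lt_of_le hs with h1 | h1
    · obtain ⟨hl, hu⟩ := hψsmall s hs0 h1.symm.le
      rw [← h1]
      simp only [Real.one_rpow, mul_one]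
      rw [← h1] at hl hu
      rw [mul_one] at hl hu
      exact ⟨pow_le_pow_left₀ ha.le hl _, pow_le_pow_left₀ (hψpos 1 one_pos).le hu _⟩
    · obtain ⟨hl, hu⟩ := hψlarge s h1
      have hkey : ∀ u : ℝ, 0 < u → (u * s ^ β) ^ (N-1) = u ^ (N-1) * s ^ α := by
        intro u hu
        rw [mul_pow, ← Real.rpow_natCast (s ^ β) (N-1), ← Real.rpow_mul hs0.le, hnm]
      have hsb : (0:ℝ) ≤ a * s ^ β := by positivity
      constructor
      · rw [← hkey a ha]
        exact pow_le_pow_left₀ hsb hl _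
      · rw [← hkey b hb]
        exact pow_le_pow_left₀ (le_trans hsb hl) hu _
  have hK : 0 < V 1 := hVpos 1 one_pos
  set K : ℝ := V 1 with hKdef
  -- split of V for x ≥ 1
  have hVsplit : ∀ x : ℝ, 1 ≤ x → V x = K + ∫ s in (1:ℝ)..x, f s := by
    intro x hx
    have := intervalIntegral.integral_add_adjacent_intervals (hfint 0 1) (hfint 1 x)
    rw [hV, hKdef, hV]
    linarith [this]
  -- integral bounds on the tail
  have htail : ∀ x : ℝ, 1 ≤ x →
      a ^ (N-1) * ((x ^ (α+1) - 1) / (α+1)) ≤ (∫ s in (1:ℝ)..x, f s) ∧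
      (∫ s in (1:ℝ)..x, f s) ≤ b ^ (N-1) * ((x ^ (α+1) - 1) / (α+1)) := by
    intro x hx
    have hint : ∀ u : ℝ, (∫ s in (1:ℝ)..x, u * s ^ α)
        = u * ((x ^ (α+1) - 1) / (α+1)) := by
      intro u
      rw [intervalIntegral.integral_const_mul, integral_rpow (Or.inl hα1),
        Real.one_rpow]
    have hirp : IntervalIntegrable (fun s : ℝ => s ^ α) volume 1 x :=
      intervalIntegral.intervalIntegrable_rpow' hα1
    constructor
    · rw [← hint (a ^ (N-1))]
      exact intervalIntegral.integral_mono_on hx (hirp.const_mul _)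
        (hfint 1 x) (fun s hs => (hfb s hs.1).1)
    · rw [← hint (b ^ (N-1))]
      exact intervalIntegral.integral_mono_on hx (hfint 1 x)
        (hirp.const_mul _) (fun s hs => (hfb s hs.1).2)
  -- two-sided power bounds on V
  set cV : ℝ := min K (a ^ (N-1) / (α+1)) with hcV
  set CV : ℝ := K + b ^ (N-1) / (α+1) with hCV
  have hcVpos : 0 < cV := lt_min hK (div_pos (pow_pos ha _) hα1p)
  have hCVpos : 0 < CV := by
    rw [hCV]
    exact add_pos hK (div_pos (pow_pos hb _) hα1p)
  have hy1 : ∀ x : ℝ, 1 ≤ x → 1 ≤ x ^ (α+1) := fun x hx =>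
    Real.one_le_rpow hx hα1p.le
  have hVlow : ∀ x : ℝ, 1 ≤ x → cV * x ^ (α+1) ≤ V x := by
    intro x hx
    have h1 := (htail x hx).1
    have h2 := hVsplit x hx
    have hy := hy1 x hx
    have hc1 : cV ≤ K := min_le_left _ _
    have hc2 : cV ≤ a ^ (N-1) / (α+1) := min_le_right _ _
    have h3 : cV * (x ^ (α+1) - 1) ≤ a ^ (N-1) * ((x ^ (α+1) - 1) / (α+1)) := by
      calc cV * (x ^ (α+1) - 1)
          ≤ a ^ (N-1) / (α+1) * (x ^ (α+1) - 1) :=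
            mul_le_mul_of_nonneg_right hc2 (by linarith)
        _ = a ^ (N-1) * ((x ^ (α+1) - 1) / (α+1)) := by ring
    linarith
  have hVhigh : ∀ x : ℝ, 1 ≤ x → V x ≤ CV * x ^ (α+1) := by
    intro x hx
    have h1 := (htail x hx).2
    have h2 := hVsplit x hx
    have hy := hy1 x hx
    have hbn : (0:ℝ) < b ^ (N-1) / (α+1) := div_pos (pow_pos hb _) hα1p
    have h3 : b ^ (N-1) * ((x ^ (α+1) - 1) / (α+1))
        ≤ b ^ (N-1) / (α+1) * x ^ (α+1) := by
      calc b ^ (N-1) * ((x ^ (α+1) - 1) / (α+1))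
          = b ^ (N-1) / (α+1) * (x ^ (α+1) - 1) := by ring
        _ ≤ b ^ (N-1) / (α+1) * x ^ (α+1) :=
            mul_le_mul_of_nonneg_left (by linarith) hbn.le
    have h4 : K * 1 ≤ K * x ^ (α+1) := mul_le_mul_of_nonneg_left hy hK.le
    rw [hCV]
    nlinarith [h1, h2, h3, h4]
  -- bounds on the integrand g t = 1 / V (√t) for t ≥ 1
  set g : ℝ → ℝ := fun t => 1 / V (Real.sqrt t) with hg
  have hsqt : ∀ t : ℝ, 1 ≤ t → Real.sqrt t ^ (α+1) = t ^ ((α+1)/2) := by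
    intro t ht
    rw [Real.sqrt_eq_rpow, ← Real.rpow_mul (by linarith)]
    ring_nf
  have hgb : ∀ t : ℝ, 1 ≤ t →
      (1/CV) * t ^ (-((α+1)/2)) ≤ g t ∧ g t ≤ (1/cV) * t ^ (-((α+1)/2)) := by
    intro t ht
    have hst : 1 ≤ Real.sqrt t := Real.one_le_sqrt.mpr ht
    have ht0 : (0:ℝ) < t := by linarith
    have htp : (0:ℝ) < t ^ ((α+1)/2) := Real.rpow_pos_of_pos ht0 _
    have hVst : 0 < V (Real.sqrt t) := hVpos _ (by linarith)
    have hlow := hVlow _ hst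
    have hhigh := hVhigh _ hst
    rw [hsqt t ht] at hlow hhigh
    have hneg : t ^ (-((α+1)/2)) = (t ^ ((α+1)/2))⁻¹ := Real.rpow_neg ht0.le _
    have hgt : g t = 1 / V (Real.sqrt t) := rfl
    constructor
    · rw [hgt, hneg]
      calc (1/CV) * (t ^ ((α+1)/2))⁻¹ = 1 / (CV * t ^ ((α+1)/2)) := by
            rw [one_div, one_div, mul_inv]
        _ ≤ 1 / V (Real.sqrt t) := one_div_le_one_div_of_le hVst hhigh
    · rw [hgt, hneg]
      calc 1 / V (Real.sqrt t) ≤ 1 / (cV * t ^ ((α+1)/2)) :=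
            one_div_le_one_div_of_le (by positivity) hlow
        _ = (1/cV) * (t ^ ((α+1)/2))⁻¹ := by rw [one_div, one_div, mul_inv]
  have hg0 : ∀ t : ℝ, 0 ≤ g t := fun t =>
    one_div_nonneg.mpr (hVnonneg _ (Real.sqrt_nonneg t))
  -- small r : the max term vanishes
  have hsmall' : ∀ r : ℝ, 0 ≤ r → r < 1 →
      max 0 (∫ t in (1:ℝ)..r^2, g t) = 0 := by
    intro r hr hr1
    have hle : (∫ t in (1:ℝ)..r^2, g t) ≤ 0 := by
      rw [intervalIntegral.integral_symm]
      have h0 : 0 ≤ ∫ t in (r^2)..(1:ℝ), g t :=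
        intervalIntegral.integral_nonneg (by nlinarith) (fun u _ => hg0 u)
      linarith
    exact max_eq_left hle
  -- integrability of g on [1, R]
  have hgint : ∀ R : ℝ, 1 ≤ R → IntervalIntegrable g volume 1 R := by
    intro R hR
    apply ContinuousOn.intervalIntegrable_of_Icc hR
    apply ContinuousOn.div continuousOn_const
      ((hVc.comp continuous_sqrt).continuousOn)
    intro t ht
    exact (hVpos _ (Real.sqrt_pos.mpr (by linarith [ht.1]))).ne'
  constructor
  · -- case β < 1/(N-1), i.e. α < 1
    intro hlt
    have hαlt : α < 1 := by
      have := (lt_div_iff₀ hm0).mp hlt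
      linarith
    have hd : (0:ℝ) < (1-α)/2 := by linarith
    set cc : ℝ := (1/CV) / ((1-α)/2) with hcc
    set CC : ℝ := (1/cV) / ((1-α)/2) with hCC
    have hccpos : 0 < cc := div_pos (div_pos one_pos hCVpos) hd
    have hCCpos : 0 < CC := div_pos (div_pos one_pos hcVpos) hd
    -- integral of the power bound
    have hIrp : ∀ r : ℝ, 1 ≤ r → (∫ t in (1:ℝ)..r^2, t ^ (-((α+1)/2)))
        = (r ^ (1-α) - 1) / ((1-α)/2) := by
      intro r hr
      rw [integral_rpow (Or.inl (by linarith : (-1:ℝ) < -((α+1)/2))), Real.one_rpow]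
      have h2 : (r^2:ℝ) ^ (-((α+1)/2) + 1) = r ^ (1-α) := by
        rw [← Real.rpow_natCast r 2, ← Real.rpow_mul (by linarith : (0:ℝ) ≤ r)]
        congr 1
        push_cast
        ring
      rw [h2]
      congr 1
      ring
    have hmain1 : ∀ r : ℝ, 1 ≤ r →
        cc * (r ^ (1-α) - 1) ≤ (∫ t in (1:ℝ)..r^2, g t) ∧
        (∫ t in (1:ℝ)..r^2, g t) ≤ CC * (r ^ (1-α) - 1) := by
      intro r hr
      have hR1 : (1:ℝ) ≤ r^2 := by nlinarith
      have hirp : IntervalIntegrable (fun t : ℝ => t ^ (-((α+1)/2))) volume 1 (r^2) :=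
        intervalIntegral.intervalIntegrable_rpow' (by linarith)
      have hconst : ∀ u : ℝ, (∫ t in (1:ℝ)..r^2, u * t ^ (-((α+1)/2)))
          = u / ((1-α)/2) * (r ^ (1-α) - 1) := by
        intro u
        rw [intervalIntegral.integral_const_mul, hIrp r hr]
        ring
      constructor
      · rw [hcc, ← hconst (1/CV)]
        exact intervalIntegral.integral_mono_on hR1 (hirp.const_mul _)
          (hgint _ hR1) (fun t ht => (hgb t ht.1).1)
      · rw [hCC, ← hconst (1/cV)]
        exact intervalIntegral.integral_mono_on hR1 (hgint _ hR1)
          (hirp.const_mul _) (fun t ht => (hgb t ht.1).2)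
    have hcpos : 0 < min 1 cc / 9 := div_pos (lt_min one_pos hccpos) (by norm_num)
    refine ⟨min 1 cc / 9, 1 + CC, hcpos, by linarith, ?_⟩
    intro r hr
    have hc9 : min 1 cc / 9 ≤ 1/9 := by
      have := min_le_left 1 cc; linarith
    have h39 : (3:ℝ) ^ (1-α) ≤ 9 := by
      calc (3:ℝ) ^ (1-α) ≤ (3:ℝ) ^ (2:ℝ) :=
            Real.rpow_le_rpow_of_exponent_le (by norm_num) (by linarith)
        _ = 9 := by
            rw [show (2:ℝ) = ((2:ℕ):ℝ) by norm_num, Real.rpow_natCast]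
            norm_num
    rcases lt_or_ge r 1 with hr1 | hr1
    · rw [hsmall' r hr hr1]
      have hb1 : (2+r) ^ (1-α) ≤ 9 := by
        calc (2+r) ^ (1-α) ≤ (3:ℝ) ^ (1-α) :=
              Real.rpow_le_rpow (by linarith) (by linarith) (by linarith)
          _ ≤ 9 := h39
      have hb2 : 1 ≤ (2+r) ^ (1-α) :=
        Real.one_le_rpow (by linarith) (by linarith)
      constructor
      · have h1 : min 1 cc / 9 * ((2+r) ^ (1-α)) ≤ (1/9) * ((2+r) ^ (1-α)) :=
          mul_le_mul_of_nonneg_right hc9 (by linarith)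
        have h2 : (1/9 : ℝ) * ((2+r) ^ (1-α)) ≤ (1/9) * 9 :=
          mul_le_mul_of_nonneg_left hb1 (by norm_num)
        linarith
      · have h1 : (1 + CC) * 1 ≤ (1 + CC) * ((2+r) ^ (1-α)) :=
          mul_le_mul_of_nonneg_left hb2 (by linarith)
        linarith
    · obtain ⟨hIl, hIu⟩ := hmain1 r hr1
      have hz1 : 1 ≤ r ^ (1-α) := Real.one_le_rpow hr1 (by linarith)
      have hInn : 0 ≤ ∫ t in (1:ℝ)..r^2, g t := by
        have := mul_nonneg hccpos.le (by linarith : (0:ℝ) ≤ r ^ (1-α) - 1)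
        linarith
      rw [max_eq_right hInn]
      have hzb : (2+r) ^ (1-α) ≤ 9 * r ^ (1-α) := by
        calc (2+r) ^ (1-α) ≤ (3*r) ^ (1-α) :=
              Real.rpow_le_rpow (by linarith) (by linarith) (by linarith)
          _ = (3:ℝ) ^ (1-α) * r ^ (1-α) :=
              Real.mul_rpow (by norm_num) (by linarith)
          _ ≤ 9 * r ^ (1-α) :=
              mul_le_mul_of_nonneg_right h39 (by linarith)
      have hz2 : r ^ (1-α) ≤ (2+r) ^ (1-α) :=
        Real.rpow_le_rpow (by linarith) (by linarith) (by linarith)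
      constructor
      · have h1 : min 1 cc / 9 * ((2+r) ^ (1-α)) ≤ min 1 cc / 9 * (9 * r ^ (1-α)) :=
          mul_le_mul_of_nonneg_left hzb hcpos.le
        have h2 : min 1 cc / 9 * (9 * r ^ (1-α)) = min 1 cc * r ^ (1-α) := by ring
        have h3 : min 1 cc * (r ^ (1-α) - 1) ≤ cc * (r ^ (1-α) - 1) :=
          mul_le_mul_of_nonneg_right (min_le_right 1 cc) (by linarith)
        have h4 : min 1 cc ≤ 1 := min_le_left 1 cc
        nlinarith [h1, h2, h3, h4, hIl]
      · have h2 : 1 + CC * (r ^ (1-α) - 1) ≤ (1 + CC) * r ^ (1-α) := by nlinarith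
        have h3 : (1 + CC) * r ^ (1-α) ≤ (1 + CC) * ((2+r) ^ (1-α)) :=
          mul_le_mul_of_nonneg_left hz2 (by linarith)
        linarith
  · -- case β = 1/(N-1), i.e. α = 1
    intro heq
    have hαe : α = 1 := by
      rw [hα, heq, one_div, inv_mul_cancel₀ hm0.ne']
    have hgb' : ∀ t : ℝ, 1 ≤ t → (1/CV) * t⁻¹ ≤ g t ∧ g t ≤ (1/cV) * t⁻¹ := by
      intro t ht
      have ht0 : (0:ℝ) < t := by linarith
      have h := hgb t ht
      have he : t ^ (-((α+1)/2)) = t⁻¹ := by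
        have e : -((α+1)/2) = -1 := by rw [hαe]; norm_num
        rw [e, show (-1:ℝ) = -(1:ℝ) by norm_num, Real.rpow_neg ht0.le, Real.rpow_one]
      rwa [he] at h
    have hIrp : ∀ r : ℝ, 1 ≤ r →
        (∫ t in (1:ℝ)..r^2, t⁻¹) = 2 * Real.log r := by
      intro r hr
      rw [integral_inv_of_pos one_pos (by positivity), div_one, Real.log_pow]
      push_cast
      ring
    have hmain2 : ∀ r : ℝ, 1 ≤ r →
        (1/CV) * (2 * Real.log r) ≤ (∫ t in (1:ℝ)..r^2, g t) ∧
        (∫ t in (1:ℝ)..r^2, g t) ≤ (1/cV) * (2 * Real.log r) := by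
      intro r hr
      have hR1 : (1:ℝ) ≤ r^2 := by nlinarith
      have hinv : IntervalIntegrable (fun t : ℝ => t⁻¹) volume 1 (r^2) := by
        apply ContinuousOn.intervalIntegrable_of_Icc hR1
        exact ContinuousOn.inv₀ continuousOn_id (fun t ht => by
          have h1 := ht.1
          intro h
          rw [h] at h1
          linarith)
      have hconst : ∀ u : ℝ, (∫ t in (1:ℝ)..r^2, u * t⁻¹)
          = u * (2 * Real.log r) := by
        intro u
        rw [intervalIntegral.integral_const_mul, hIrp r hr]
      constructor
      · rw [← hconst (1/CV)]
        exact intervalIntegral.integral_mono_on hR1 (hinv.const_mul _)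
          (hgint _ hR1) (fun t ht => (hgb' t ht.1).1)
      · rw [← hconst (1/cV)]
        exact intervalIntegral.integral_mono_on hR1 (hgint _ hR1)
          (hinv.const_mul _) (fun t ht => (hgb' t ht.1).2)
    have hlog3 : 0 < Real.log 3 := Real.log_pos (by norm_num)
    have hlog2 : 0 < Real.log 2 := Real.log_pos (by norm_num)
    set M : ℝ := max (Real.log 3) (CV/2) with hM
    have hMpos : 0 < M := lt_of_lt_of_le hlog3 (le_max_left _ _)
    refine ⟨1/M, 1/Real.log 2 + 2 * (1/cV), div_pos one_pos hMpos,
      add_pos (div_pos one_pos hlog2)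
        (mul_pos two_pos (div_pos one_pos hcVpos)), ?_⟩
    intro r hr
    rcases lt_or_ge r 1 with hr1 | hr1
    · rw [hsmall' r hr hr1]
      have hL3 : Real.log (2+r) ≤ Real.log 3 :=
        Real.log_le_log (by linarith) (by linarith)
      have hL2 : Real.log 2 ≤ Real.log (2+r) :=
        Real.log_le_log (by norm_num) (by linarith)
      constructor
      · have h1 : (1/M) * Real.log (2+r) ≤ (1/M) * M := by
          apply mul_le_mul_of_nonneg_left _ (by positivity)
          calc Real.log (2+r) ≤ Real.log 3 := hL3
            _ ≤ M := le_max_left _ _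
        have h2 : (1/M) * M = 1 := by field_simp
        linarith
      · have h1 : (1/Real.log 2) * Real.log 2 ≤ (1/Real.log 2) * Real.log (2+r) :=
          mul_le_mul_of_nonneg_left hL2 (by positivity)
        have h2 : (1/Real.log 2) * Real.log 2 = 1 := by field_simp
        have h3 : 0 ≤ 2 * (1/cV) * Real.log (2+r) :=
          mul_nonneg (mul_nonneg (by norm_num) (one_div_nonneg.mpr hcVpos.le))
            (by linarith)
        nlinarith [h1, h2, h3]
    · obtain ⟨hIl, hIu⟩ := hmain2 r hr1
      have hl0 : (0:ℝ) ≤ Real.log r := Real.log_nonneg hr1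
      have hInn : 0 ≤ ∫ t in (1:ℝ)..r^2, g t := by
        have : 0 ≤ (1/CV) * (2 * Real.log r) :=
          mul_nonneg (one_div_nonneg.mpr hCVpos.le) (by linarith)
        linarith
      rw [max_eq_right hInn]
      have hLr : Real.log (2+r) ≤ Real.log 3 + Real.log r := by
        calc Real.log (2+r) ≤ Real.log (3*r) :=
              Real.log_le_log (by linarith) (by linarith)
          _ = Real.log 3 + Real.log r :=
              Real.log_mul (by norm_num) (by intro h; rw [h] at hr1; linarith)
      have hrL : Real.log r ≤ Real.log (2+r) :=
        Real.log_le_log (by linarith) (by linarith)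
      have hL2 : Real.log 2 ≤ Real.log (2+r) :=
        Real.log_le_log (by norm_num) (by linarith)
      constructor
      · have hM1 : Real.log 3 ≤ M := le_max_left _ _
        have hM2 : CV/2 ≤ M := le_max_right _ _
        have e1 : CV/2 * ((1/CV) * (2*Real.log r)) = Real.log r := by
          field_simp
        have e2 : CV/2 * ((1/CV) * (2*Real.log r)) ≤ M * ((1/CV) * (2*Real.log r)) := by
          apply mul_le_mul_of_nonneg_right hM2
          exact mul_nonneg (one_div_nonneg.mpr hCVpos.le) (by linarith)
        have hkey : Real.log (2+r) ≤ M * (1 + (1/CV) * (2 * Real.log r)) := by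
          nlinarith [hLr, hM1, e1, e2]
        have h1 : (1/M) * Real.log (2+r) ≤ (1/M) * (M * (1 + (1/CV) * (2 * Real.log r))) :=
          mul_le_mul_of_nonneg_left hkey (by positivity)
        have h2 : (1/M) * (M * (1 + (1/CV) * (2 * Real.log r)))
            = 1 + (1/CV) * (2 * Real.log r) := by
          field_simp
        linarith
      · have h1 : (1:ℝ) ≤ (1/Real.log 2) * Real.log (2+r) := by
          have := mul_le_mul_of_nonneg_left hL2 (by positivity : (0:ℝ) ≤ 1/Real.log 2)
          have e : (1/Real.log 2) * Real.log 2 = 1 := by field_simp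
          linarith
        have h2 : (1/cV) * (2 * Real.log r) ≤ (1/cV) * (2 * Real.log (2+r)) := by
          apply mul_le_mul_of_nonneg_left _ (one_div_nonneg.mpr hcVpos.le)
          linarith
        nlinarith [hIu, h1, h2]
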